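/- arXiv:2209.01190 — 3 statements merged into one kernel-verified Lean document; each statement's English description precedes it below -/
import Mathlib

section
/- Let m+n points be in convex position on a circle, colored with m red points and n blue points, such that all red points appear consecutively in the circular order. Then the straight-line drawing of the complete bipartite graph between red and blue points has exactly 2 edges on the convex hull boundary, and any plane (crossing-free) subset of its edges has cardinality at most m+n−1. -/
/-!
Place the points counterclockwise on the circle, reds first. Any three of them, taken in index
order, turn counterclockwise, so chords `(i, k)` and `(j, l)` with `i < j < k < l` cross.
A chord between cyclically consecutive points has all other points on one side and is a hull
edge; any other chord is crossed by a chord joining the two arcs it cuts off, and the crossing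
point lies in the interior of the hull. Among bichromatic chords only `(m - 1, m)` and
`(0, m + n - 1)` are consecutive. Finally, two bichromatic edges `(i, j)` and `(i', j')` with
`j - i = j' - i'` interleave, so a crossing-free set injects into the lengths `1, …, m + n - 1`.
-/

open Real Set

open scoped Classical

section ConvexGeometry

variable {E : Type*} [NormedAddCommGroup E] [NormedSpace ℝ E]

theorem notMem_interior_of_isMinOn {l : E →L[ℝ] ℝ} (hl : l ≠ 0) {s : Set E} {x : E}
    (h : IsMinOn l s x) : x ∉ interior s := fun hx =>
  hl ((h.isLocalMin (mem_interior_iff_mem_nhds.1 hx)).hasFDerivAt_eq_zero l.hasFDerivAt)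

theorem mem_interior_of_mem_openSegment_inter [FiniteDimensional ℝ E] {s : Set E}
    (hs : Convex ℝ s) {a b c d x : E} (ha : a ∈ s) (hb : b ∈ s) (hc : c ∈ s) (hd : d ∈ s)
    (hspan : affineSpan ℝ {a, b, c, d} = ⊤)
    (hac : x ∈ openSegment ℝ a c) (hbd : x ∈ openSegment ℝ b d) : x ∈ interior s := by
  have hhull : convexHull ℝ {a, b, c, d} ⊆ s := convexHull_min (by grind) hs
  obtain ⟨z, hz⟩ : (interior s).Nonempty :=
    (interior_convexHull_nonempty_iff_affineSpan_eq_top.2 hspan).mono (interior_mono hhull)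
  -- A functional supporting `s` at `x` is constant on both chords, hence on their affine span.
  by_contra hx
  obtain ⟨l, hl⟩ := geometric_hahn_banach_open_point hs.interior isOpen_interior hx
  have hmax : ∀ y ∈ s, l y ≤ l x := by
    have : closure (interior s) ⊆ {y | l y ≤ l x} :=
      closure_minimal (fun y hy => (hl y hy).le) (isClosed_le l.continuous continuous_const)
    rw [hs.closure_interior_eq_closure_of_nonempty_interior ⟨z, hz⟩] at this
    exact fun y hy => this (subset_closure hy)
  have hxs : x ∈ s := hs.segment_subset ha hc (openSegment_subset_segment ℝ a c hac)
  have hface := (ContinuousLinearMap.toExposed.isExposed (l := l) (A := s)).isExtreme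
  have hlevel : ∀ y ∈ ({a, b, c, d} : Set E), l y = l x := by
    have hmem : ∀ y ∈ l.toExposed s, l y = l x := fun y hy => le_antisymm (hmax y hy.1) (hy.2 x hxs)
    have hxface : x ∈ l.toExposed s := ⟨hxs, hmax⟩
    rintro y (rfl | rfl | rfl | rfl)
    · exact hmem _ (hface.left_mem_of_mem_openSegment ha hc hxface hac)
    · exact hmem _ (hface.left_mem_of_mem_openSegment hb hd hxface hbd)
    · exact hmem _ (hface.right_mem_of_mem_openSegment ha hc hxface hac)
    · exact hmem _ (hface.right_mem_of_mem_openSegment hb hd hxface hbd)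
  have hker : vectorSpan ℝ ({a, b, c, d} : Set E) ≤ LinearMap.ker (l : E →ₗ[ℝ] ℝ) := by
    rw [vectorSpan_def, Submodule.span_le]
    rintro _ ⟨u, hu, v, hv, rfl⟩
    simp [hlevel u hu, hlevel v hv]
  rw [AffineSubspace.vectorSpan_eq_top_of_affineSpan_eq_top ℝ E E hspan] at hker
  have hzx : l (z - x) = 0 := hker Submodule.mem_top
  have := hl z hz
  rw [map_sub] at hzx
  linarith

end ConvexGeometry

/-- Twice the signed area of the triangle `a b c`: positive iff `a, b, c` turn counterclockwise. -/
def orient (a b c : ℝ × ℝ) : ℝ := (b.1 - a.1) * (c.2 - a.2) - (b.2 - a.2) * (c.1 - a.1)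

theorem orient_rotate (a b c : ℝ × ℝ) : orient b c a = orient a b c := by
  unfold orient; ring

@[simp]
theorem orient_self_left (a c : ℝ × ℝ) : orient a a c = 0 := by
  simp [orient]

@[simp]
theorem orient_self_right (a b : ℝ × ℝ) : orient a b b = 0 := by
  unfold orient; ring

@[simp]
theorem orient_self_outer (a b : ℝ × ℝ) : orient a b a = 0 := by
  unfold orient; ring

theorem affineSpan_eq_top_of_orient_ne_zero {a b c : ℝ × ℝ} (h : orient a b c ≠ 0) :
    affineSpan ℝ {a, b, c} = ⊤ := by
  rw [AffineSubspace.affineSpan_eq_top_iff_vectorSpan_eq_top_of_nonempty ℝ _ _ ⟨a, by simp⟩,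
    eq_top_iff]
  intro w _
  have hw : w = (((w.1 * (c.2 - a.2) - w.2 * (c.1 - a.1)) / orient a b c) • (b - a) +
      (((b.1 - a.1) * w.2 - (b.2 - a.2) * w.1) / orient a b c) • (c - a)) := by
    ext <;> simp only [Prod.fst_add, Prod.snd_add, Prod.smul_fst, Prod.smul_snd, Prod.fst_sub,
      Prod.snd_sub, smul_eq_mul] <;>
      rw [div_mul_eq_mul_div, div_mul_eq_mul_div, ← add_div, eq_div_iff h, orient] <;> ring
  rw [hw]
  exact add_mem (Submodule.smul_mem _ _ (vsub_mem_vectorSpan ℝ (by simp) (by simp)))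
    (Submodule.smul_mem _ _ (vsub_mem_vectorSpan ℝ (by simp) (by simp)))

theorem openSegment_inter_nonempty_of_orient_pos {a b c d : ℝ × ℝ} (habc : 0 < orient a b c)
    (hbcd : 0 < orient b c d) (hcda : 0 < orient c d a) (hdab : 0 < orient d a b) :
    (openSegment ℝ a c ∩ openSegment ℝ b d).Nonempty := by
  -- The crossing point divides each diagonal in the ratio of the areas of the two triangles
  -- standing on it.
  set t := orient d a b / (orient d a b + orient b c d)
  set s := orient a b c / (orient a b c + orient c d a)
  have ht : 0 < t ∧ t < 1 := ⟨by positivity, (div_lt_one (by positivity)).2 (by linarith)⟩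
  have hs : 0 < s ∧ s < 1 := ⟨by positivity, (div_lt_one (by positivity)).2 (by linarith)⟩
  refine ⟨(1 - t) • a + t • c, ⟨1 - t, t, by linarith, ht.1, by ring, rfl⟩,
    1 - s, s, by linarith, hs.1, by ring, ?_⟩
  have h1 : orient d a b + orient b c d ≠ 0 := by positivity
  have h2 : orient a b c + orient c d a ≠ 0 := by positivity
  simp only [t, s] at h1 h2 ⊢
  unfold orient at h1 h2 ⊢
  ext <;> simp only [Prod.fst_add, Prod.snd_add, Prod.smul_fst, Prod.smul_snd, smul_eq_mul] <;>
    field_simp <;> ring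

theorem segment_subset_frontier_convexHull_of_orient_nonneg {S : Set (ℝ × ℝ)} {a b : ℝ × ℝ}
    (ha : a ∈ S) (hb : b ∈ S) (hab : a ≠ b) (hS : ∀ x ∈ S, 0 ≤ orient a b x) :
    segment ℝ a b ⊆ frontier (convexHull ℝ S) := by
  set l : ℝ × ℝ →L[ℝ] ℝ :=
    (b.1 - a.1) • ContinuousLinearMap.snd ℝ ℝ ℝ - (b.2 - a.2) • ContinuousLinearMap.fst ℝ ℝ ℝ
  have hl : ∀ x, orient a b x = l x - l a := fun x => by
    simp only [orient, l, sub_apply, smul_apply, ContinuousLinearMap.coe_snd',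
      ContinuousLinearMap.coe_fst', smul_eq_mul]
    ring
  have hl0 : l ≠ 0 := fun h0 => hab <| by
    have h1 := congrArg (· (1, 0)) h0
    have h2 := congrArg (· (0, 1)) h0
    simp only [l, sub_apply, smul_apply, ContinuousLinearMap.coe_snd',
      ContinuousLinearMap.coe_fst', zero_apply, smul_eq_mul, mul_zero, mul_one, zero_sub, neg_sub,
      sub_zero] at h1 h2
    ext <;> linarith
  have hhull : convexHull ℝ S ⊆ {y | l a ≤ l y} :=
    convexHull_min (fun x hx => show l a ≤ l x by linarith [hS x hx, hl x])
      (convex_halfSpace_ge l.isLinear _)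
  intro x hx
  have hxS : x ∈ convexHull ℝ S :=
    (convex_convexHull ℝ S).segment_subset (subset_convexHull ℝ S ha) (subset_convexHull ℝ S hb) hx
  have hxa : l x ≤ l a :=
    (convex_halfSpace_le l.isLinear (l a)).segment_subset (show l a ≤ l a from le_rfl)
      (show l b ≤ l a by linarith [hl b, orient_self_right a b]) hx
  exact ⟨subset_closure hxS,
    notMem_interior_of_isMinOn hl0 fun y hy => hxa.trans (hhull hy)⟩

theorem segment_subset_frontier_of_forall_orient_pos {N : ℕ} {p : Fin N → ℝ × ℝ} (hN : 3 ≤ N)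
    {i j : Fin N} (h : ∀ k, k ≠ i → k ≠ j → 0 < orient (p i) (p j) (p k)) :
    segment ℝ (p i) (p j) ⊆ frontier (convexHull ℝ (range p)) := by
  obtain ⟨k, hki, hkj⟩ := Fin.exists_ne_and_ne_of_two_lt i j hN
  refine segment_subset_frontier_convexHull_of_orient_nonneg ⟨i, rfl⟩ ⟨j, rfl⟩ (fun hpij => ?_) ?_
  · simpa [hpij] using h k hki hkj
  · rintro _ ⟨k, rfl⟩
    by_cases hki : k = i
    · simp [hki]
    by_cases hkj : k = j
    · simp [hkj]
    exact (h k hki hkj).le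

theorem sin_add_sin_sub_sin_add_pos {x y : ℝ} (hx : 0 < x) (hy : 0 < y) (hxy : x + y < 2 * π) :
    0 < sin x + sin y - sin (x + y) := by
  have key : ∀ u v : ℝ,
      sin (2 * u) + sin (2 * v) - sin (2 * u + 2 * v) = 4 * sin u * sin v * sin (u + v) := by
    intro u v
    rw [← mul_add, sin_two_mul, sin_two_mul, sin_two_mul, sin_add, cos_add]
    linear_combination (-2 * sin u * cos u) * sin_sq_add_cos_sq v -
      (2 * sin v * cos v) * sin_sq_add_cos_sq u
  have hpi := pi_pos
  have := sin_pos_of_pos_of_lt_pi (x := x / 2) (by linarith) (by linarith)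
  have := sin_pos_of_pos_of_lt_pi (x := y / 2) (by linarith) (by linarith)
  have := sin_pos_of_pos_of_lt_pi (x := x / 2 + y / 2) (by linarith) (by linarith)
  calc 0 < 4 * sin (x / 2) * sin (y / 2) * sin (x / 2 + y / 2) := by positivity
    _ = sin x + sin y - sin (x + y) := by rw [← key]; ring_nf

theorem orient_circle (c : ℝ × ℝ) (ρ α β γ : ℝ) :
    orient (c.1 + ρ * cos α, c.2 + ρ * sin α) (c.1 + ρ * cos β, c.2 + ρ * sin β)
      (c.1 + ρ * cos γ, c.2 + ρ * sin γ) =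
      ρ ^ 2 * (sin (β - α) + sin (γ - β) - sin ((β - α) + (γ - β))) := by
  rw [show β - α + (γ - β) = γ - α by ring, sin_sub, sin_sub, sin_sub, orient]
  ring

/-- The points `p 0, …, p (N - 1)` are the vertices of a strictly convex polygon, listed
counterclockwise. -/
def IsCcwConvexPosition {N : ℕ} (p : Fin N → ℝ × ℝ) : Prop :=
  ∀ ⦃i j k : Fin N⦄, i < j → j < k → 0 < orient (p i) (p j) (p k)

theorem isCcwConvexPosition_circle {N : ℕ} (c : ℝ × ℝ) {ρ : ℝ} (hρ : 0 < ρ) {θ : Fin N → ℝ}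
    (hθ : StrictMono θ) (hθrange : ∀ i, θ i ∈ Ico 0 (2 * π)) :
    IsCcwConvexPosition fun i => (c.1 + ρ * cos (θ i), c.2 + ρ * sin (θ i)) := by
  intro i j k hij hjk
  have hij' := hθ hij
  have hjk' := hθ hjk
  rw [orient_circle]
  exact mul_pos (pow_pos hρ 2) (sin_add_sin_sub_sin_add_pos (by linarith) (by linarith)
    (by linarith [(hθrange k).2, (hθrange i).1]))

namespace IsCcwConvexPosition

variable {N : ℕ} {p : Fin N → ℝ × ℝ}

theorem openSegment_inter_nonempty (hp : IsCcwConvexPosition p) {i j k l : Fin N}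
    (hij : i < j) (hjk : j < k) (hkl : k < l) :
    (openSegment ℝ (p i) (p k) ∩ openSegment ℝ (p j) (p l)).Nonempty :=
  openSegment_inter_nonempty_of_orient_pos (hp hij hjk) (hp hjk hkl)
    (by rw [orient_rotate]; exact hp (hij.trans hjk) hkl)
    (by rw [orient_rotate, orient_rotate]; exact hp hij (hjk.trans hkl))

theorem not_segment_subset_frontier (hp : IsCcwConvexPosition p) {i j k l : Fin N}
    (hik : i < k) (hkj : k < j) (hl : l < i ∨ j < l) :
    ¬ segment ℝ (p i) (p j) ⊆ frontier (convexHull ℝ (range p)) := by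
  intro hsub
  obtain ⟨x, hx, hx'⟩ : (openSegment ℝ (p i) (p j) ∩ openSegment ℝ (p k) (p l)).Nonempty := by
    rcases hl with hli | hjl
    · rw [inter_comm, openSegment_symm ℝ (p k)]
      exact hp.openSegment_inter_nonempty hli hik hkj
    · exact hp.openSegment_inter_nonempty hik hkj hjl
  have hmem : ∀ r, p r ∈ convexHull ℝ (range p) := fun r => subset_convexHull ℝ _ ⟨r, rfl⟩
  have hspan : affineSpan ℝ {p i, p k, p j, p l} = ⊤ :=
    top_le_iff.1 <| (affineSpan_eq_top_of_orient_ne_zero (hp hik hkj).ne').ge.trans <|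
      affineSpan_mono ℝ (by grind)
  have hint := mem_interior_of_mem_openSegment_inter (convex_convexHull ℝ _) (hmem i) (hmem k)
    (hmem j) (hmem l) hspan hx hx'
  exact (hsub (openSegment_subset_segment ℝ _ _ hx)).2 hint

theorem segment_subset_frontier_iff (hp : IsCcwConvexPosition p) (hN : 3 ≤ N) {i j : Fin N}
    (hij : i < j) :
    segment ℝ (p i) (p j) ⊆ frontier (convexHull ℝ (range p)) ↔
      j.val = i.val + 1 ∨ (i.val = 0 ∧ j.val = N - 1) := by
  constructor
  · intro hsub
    by_contra! h
    have hk : i.val + 1 < j.val := by omega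
    obtain ⟨l, hl⟩ : ∃ l : Fin N, l < i ∨ j < l := by
      by_cases hi : i.val = 0
      · exact ⟨⟨N - 1, by omega⟩, Or.inr (Fin.lt_def.2 (by dsimp only; omega))⟩
      · exact ⟨⟨0, by omega⟩, Or.inl (Fin.lt_def.2 (by dsimp only; omega))⟩
    exact hp.not_segment_subset_frontier (k := ⟨i + 1, by omega⟩) (Fin.lt_def.2 (by simp))
      (Fin.lt_def.2 (by dsimp only; omega)) hl hsub
  · rintro (hadj | ⟨hi, hj⟩)
    · refine segment_subset_frontier_of_forall_orient_pos hN fun k hki hkj => ?_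
      rcases lt_or_gt_of_ne hki with hki | hik
      · rw [orient_rotate]
        exact hp hki hij
      · exact hp hij (by rw [Fin.lt_def] at *; omega)
    · rw [segment_symm]
      refine segment_subset_frontier_of_forall_orient_pos hN fun k hkj hki => ?_
      rw [← orient_rotate]
      exact hp (by rw [Fin.lt_def] at *; omega) (by rw [Fin.lt_def] at *; omega)

end IsCcwConvexPosition

theorem IsCcwConvexPosition.card_bichromatic_hull_edges {m n : ℕ} {p : Fin (m + n) → ℝ × ℝ}
    (hp : IsCcwConvexPosition p) (hm : 1 ≤ m) (hn : 1 ≤ n) (hmn : 3 ≤ m + n) :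
    (Finset.univ.filter (fun e : Fin (m + n) × Fin (m + n) =>
        e.1.val < m ∧ m ≤ e.2.val ∧
        segment ℝ (p e.1) (p e.2) ⊆ frontier (convexHull ℝ (Set.range p)))).card = 2 := by
  have hedges : Finset.univ.filter (fun e : Fin (m + n) × Fin (m + n) =>
        e.1.val < m ∧ m ≤ e.2.val ∧
        segment ℝ (p e.1) (p e.2) ⊆ frontier (convexHull ℝ (Set.range p))) =
      {(⟨m - 1, by omega⟩, ⟨m, by omega⟩), (⟨0, by omega⟩, ⟨m + n - 1, by omega⟩)} := by
    ext ⟨i, j⟩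
    simp only [Finset.mem_filter, Finset.mem_univ, true_and, Finset.mem_insert,
      Finset.mem_singleton, Prod.mk.injEq, Fin.ext_iff]
    constructor
    · rintro ⟨hi, hj, hsub⟩
      rw [hp.segment_subset_frontier_iff hmn (by rw [Fin.lt_def]; omega)] at hsub
      omega
    · intro h
      refine ⟨by omega, by omega, ?_⟩
      rw [hp.segment_subset_frontier_iff hmn (by rw [Fin.lt_def]; omega)]
      omega
  rw [hedges, Finset.card_pair]
  simp only [ne_eq, Prod.mk.injEq, Fin.ext_iff]
  omega

theorem card_le_of_forall_not_interleaved {N m : ℕ} (E : Finset (Fin N × Fin N))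
    (hE : ∀ e ∈ E, e.1.val < m ∧ m ≤ e.2.val)
    (hinter : ∀ e ∈ E, ∀ f ∈ E, ¬ (e.1 < f.1 ∧ f.1 < e.2 ∧ e.2 < f.2)) : E.card ≤ N - 1 := by
  have hinj : Set.InjOn (fun e : Fin N × Fin N => e.2.val - e.1.val) E := by
    intro e he f hf h
    have := hE e he
    have := hE f hf
    have := hinter e he f hf
    have := hinter f hf e he
    simp only [Fin.lt_def] at *
    exact Prod.ext (Fin.ext (by omega)) (Fin.ext (by omega))
  calc E.card = (E.image fun e : Fin N × Fin N => e.2.val - e.1.val).card :=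
        (Finset.card_image_of_injOn hinj).symm
    _ ≤ (Finset.Icc 1 (N - 1)).card := by
        refine Finset.card_le_card fun d hd => ?_
        obtain ⟨e, he, rfl⟩ := Finset.mem_image.1 hd
        have := hE e he
        have := e.2.isLt
        simp only [Finset.mem_Icc]
        omega
    _ = N - 1 := by simp

/-- `m` red and `n` blue points on a circle, in convex position, with the red
points (indices `< m`) consecutive in the circular order. The straight-line
drawing of the complete bipartite graph between red and blue points has exactly
2 edges on the convex hull boundary, and any plane (crossing-free) subset of its
edges has cardinality at most `m + n - 1`. -/
theorem bipartite_convex_plane_subdrawing_bound (m n : ℕ) (hm : 1 ≤ m) (hn : 1 ≤ n)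
    (hmn : 3 ≤ m + n)
    (p : Fin (m + n) → ℝ × ℝ) (c : ℝ × ℝ) (ρ : ℝ) (hρ : 0 < ρ)
    (θ : Fin (m + n) → ℝ) (hθmono : StrictMono θ)
    (hθrange : ∀ i, θ i ∈ Set.Ico 0 (2 * π))
    (hp : ∀ i, p i = (c.1 + ρ * cos (θ i), c.2 + ρ * sin (θ i))) :
    -- exactly two bichromatic edges lie on the convex hull boundary
    ((Finset.univ.filter (fun e : Fin (m + n) × Fin (m + n) =>
        e.1.val < m ∧ m ≤ e.2.val ∧
        segment ℝ (p e.1) (p e.2) ⊆ frontier (convexHull ℝ (Set.range p)))).card = 2)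
    ∧
    -- any crossing-free set of bichromatic edges has at most m+n-1 elements
    (∀ E : Finset (Fin (m + n) × Fin (m + n)),
      (∀ e ∈ E, e.1.val < m ∧ m ≤ e.2.val) →
      (∀ e ∈ E, ∀ f ∈ E, e ≠ f →
        openSegment ℝ (p e.1) (p e.2) ∩ openSegment ℝ (p f.1) (p f.2) = ∅) →
      E.card ≤ m + n - 1) := by
  have hccw : IsCcwConvexPosition p := by
    rw [funext hp]
    exact isCcwConvexPosition_circle c hρ hθmono hθrange
  refine ⟨hccw.card_bichromatic_hull_edges hm hn hmn, fun E hE hplane => ?_⟩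
  refine card_le_of_forall_not_interleaved E hE fun e he f hf ⟨h₁, h₂, h₃⟩ => ?_
  have hef : e ≠ f := fun h => (h ▸ h₁).false
  exact (hccw.openSegment_inter_nonempty h₁ h₂ h₃).ne_empty (hplane e he f hf hef)
end

section
/- For any finite set of points in the plane in general position, partitioned into nonempty red and blue classes, the straight-line drawing of the complete bipartite graph between the classes contains a crossing-free spanning tree. -/
/-!
Choose a linear functional `f` that is injective on the points and let `r` be the point
minimising it. Every other point lies in the open half-plane `f > f (p r)`, where the rays from
`p r` are linearly ordered by the slope coordinate `g / f`. Join `r` to every point of the other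
colour, and join each further point `q` of `r`'s colour to the opposite-coloured point whose ray
is the nearest one not above the ray of `q` (the lowest one if there is none). Attaching in the
same way an arbitrary point `x ≠ p r` of the plane to an opposite-coloured point, every point of
an edge is attached to the opposite-coloured endpoint of that edge, so edges without a common
endpoint are disjoint; edges with a common endpoint meet only there, by general position. The
parent map strictly decreases the depth `2 > 1 > 0`, so the graph is a tree.
-/

open Finset Function SimpleGraph

theorem fromRel_adj_self_of_rank_lt {V : Type*} {par : V → V} {rank : V → ℕ} {v : V}
    (hv : rank (par v) < rank v) : (fromRel fun v w => par v = w).Adj v (par v) :=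
  (fromRel_adj _ _ _).2 ⟨fun h => hv.ne (by rw [← h]), Or.inl rfl⟩

theorem card_edgeSet_fromRel_add_one {V : Type*} [Finite V] (par : V → V) (rank : V → ℕ)
    (r : V) (hr : par r = r) (hrank : ∀ v, v ≠ r → rank (par v) < rank v) :
    Nat.card (fromRel fun v w => par v = w).edgeSet + 1 = Nat.card V := by
  let φ : {v // v ≠ r} → (fromRel fun v w => par v = w).edgeSet :=
    fun v => ⟨s(v, par v), fromRel_adj_self_of_rank_lt (hrank v v.2)⟩
  have hφ : Bijective φ := by
    constructor
    · rintro ⟨v, hv⟩ ⟨w, hw⟩ h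
      rw [Subtype.ext_iff, Sym2.eq_iff] at h
      rcases h with ⟨h, -⟩ | ⟨hvw, hwv⟩
      · exact Subtype.ext h
      · have hv' := hrank v hv
        have hw' := hrank w hw
        simp only at hvw hwv
        rw [hwv] at hv'
        rw [← hvw] at hw'
        omega
    · rintro ⟨e, he⟩
      induction e using Sym2.ind with
      | _ x y =>
        obtain ⟨hxy, rfl | rfl⟩ := (fromRel_adj _ _ _).1 ((mem_edgeSet _).1 he)
        · exact ⟨⟨x, fun h => hxy (h ▸ hr.symm)⟩, rfl⟩
        · exact ⟨⟨y, fun h => hxy (h ▸ hr)⟩, Subtype.ext Sym2.eq_swap⟩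
  rw [← Nat.card_eq_of_bijective φ hφ]
  have := Fintype.ofFinite V
  have : Nonempty V := ⟨r⟩
  classical
  rw [Nat.card_eq_fintype_card, Nat.card_eq_fintype_card, Fintype.card_subtype_compl,
    Fintype.card_subtype_eq]
  exact Nat.sub_add_cancel Fintype.card_pos

theorem isTree_fromRel_of_rank_lt {V : Type*} [Finite V] (par : V → V) (rank : V → ℕ) (r : V)
    (hr : par r = r) (hrank : ∀ v, v ≠ r → rank (par v) < rank v) :
    (fromRel fun v w => par v = w).IsTree := by
  have hreach : ∀ v, (fromRel fun v w => par v = w).Reachable v r := by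
    intro v
    induction h : rank v using Nat.strong_induction_on generalizing v with
    | _ n ih =>
      by_cases hv : v = r
      · exact hv ▸ Reachable.refl _
      · exact (fromRel_adj_self_of_rank_lt (hrank v hv)).reachable.trans
          (ih _ (h ▸ hrank v hv) _ rfl)
  have : Nonempty V := ⟨r⟩
  exact isTree_iff_connected_and_card.2 ⟨⟨fun v w => (hreach v).trans (hreach w).symm⟩,
    card_edgeSet_fromRel_add_one par rank r hr hrank⟩

namespace Finset

variable {α : Type*} [LinearOrder α] (S : Finset α)

def floorOrMin (t : α) : α :=
  if h : (S.filter (· ≤ t)).Nonempty then (S.filter (· ≤ t)).max' h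
  else if hS : S.Nonempty then S.min' hS else t

variable {S}

theorem floorOrMin_mem (hS : S.Nonempty) (t : α) : S.floorOrMin t ∈ S := by
  unfold floorOrMin
  split_ifs with h
  · exact (mem_filter.1 (max'_mem _ h)).1
  · exact min'_mem S hS

theorem floorOrMin_of_le {t c : α} (hc : c ∈ S) (hct : c ≤ t)
    (hmax : ∀ s ∈ S, s ≤ t → s ≤ c) : S.floorOrMin t = c := by
  have h : (S.filter (· ≤ t)).Nonempty := ⟨c, mem_filter.2 ⟨hc, hct⟩⟩
  rw [floorOrMin, dif_pos h]
  exact le_antisymm (max'_le _ h _ fun s hs => hmax s (mem_filter.1 hs).1 (mem_filter.1 hs).2)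
    (le_max' _ c (mem_filter.2 ⟨hc, hct⟩))

theorem floorOrMin_of_mem {s : α} (hs : s ∈ S) : S.floorOrMin s = s :=
  floorOrMin_of_le hs le_rfl fun _ _ h => h

theorem floorOrMin_eq_of_mem_uIcc {t t' : α} (ht' : t' ∈ Set.uIcc t (S.floorOrMin t)) :
    S.floorOrMin t' = S.floorOrMin t := by
  by_cases hS : S.Nonempty
  swap
  · rw [not_nonempty_iff_eq_empty] at hS
    simp_all [floorOrMin]
  by_cases hbelow : (S.filter (· ≤ t)).Nonempty
  · have hc : S.floorOrMin t = (S.filter (· ≤ t)).max' hbelow := dif_pos hbelow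
    have hct := (mem_filter.1 ((S.filter (· ≤ t)).max'_mem hbelow)).2
    rw [hc, Set.uIcc_of_ge hct] at ht'
    rw [hc]
    refine floorOrMin_of_le (mem_filter.1 (max'_mem _ hbelow)).1 ht'.1 fun s hs hst' => ?_
    exact le_max' (S.filter (· ≤ t)) s (mem_filter.2 ⟨hs, hst'.trans ht'.2⟩)
  · have hc : S.floorOrMin t = S.min' hS := by rw [floorOrMin, dif_neg hbelow, dif_pos hS]
    have hmin : ∀ s ∈ S, t < s := fun s hs =>
      not_le.1 fun h => hbelow ⟨s, mem_filter.2 ⟨hs, h⟩⟩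
    rw [hc, Set.uIcc_of_le (hmin _ (min'_mem S hS)).le] at ht'
    rw [hc]
    by_cases hbelow' : (S.filter (· ≤ t')).Nonempty
    · obtain ⟨s, hs⟩ := hbelow'
      rw [mem_filter] at hs
      exact floorOrMin_of_le (min'_mem S hS) ((min'_le S s hs.1).trans hs.2)
        fun s _ hst' => hst'.trans ht'.2
    · rw [floorOrMin, dif_neg hbelow', dif_pos hS]

end Finset

section RayCoord

variable {E : Type*} [AddCommGroup E] [Module ℝ E] (f g : E →ₗ[ℝ] ℝ)

/-- On the half-space `0 < f`, this is constant along rays from the origin and orders them. -/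
noncomputable def rayCoord (v : E) : ℝ := g v / f v

variable {f g}

theorem rayCoord_smul {c : ℝ} (hc : c ≠ 0) (v : E) :
    rayCoord f g (c • v) = rayCoord f g v := by
  simp only [rayCoord, map_smul, smul_eq_mul, mul_div_mul_left _ _ hc]

theorem rayCoord_mem_segment {u w x : E} (hu : 0 < f u) (hw : 0 < f w)
    (hx : x ∈ segment ℝ u w) :
    rayCoord f g x ∈ segment ℝ (rayCoord f g u) (rayCoord f g w) := by
  have hfx : 0 < f x := (convex_halfSpace_gt f.isLinear 0).segment_subset hu hw hx
  obtain ⟨a, b, ha, hb, hab, rfl⟩ := hx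
  have hfx' : f (a • u + b • w) = a * f u + b * f w := by simp
  refine ⟨a * f u / f (a • u + b • w), b * f w / f (a • u + b • w), by positivity, by positivity,
    by rw [← add_div, hfx', div_self (hfx' ▸ hfx).ne'], ?_⟩
  simp only [rayCoord, smul_eq_mul]
  field_simp
  simp

theorem eq_smul_of_rayCoord_eq (hfg : ∀ v, f v = 0 → g v = 0 → v = 0) {u w : E}
    (hu : f u ≠ 0) (hw : f w ≠ 0) (h : rayCoord f g u = rayCoord f g w) :
    u = (f u / f w) • w := by
  unfold rayCoord at h
  field_simp at h
  refine sub_eq_zero.1 (hfg _ ?_ ?_) <;> simp only [map_sub, map_smul, smul_eq_mul]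
  · field_simp
    ring
  · field_simp
    linear_combination h

end RayCoord

def GeneralPosition {ι E : Type*} [AddCommGroup E] [Module ℝ E] (p : ι → E) : Prop :=
  ∀ i j k, i ≠ j → j ≠ k → i ≠ k → ¬ Collinear ℝ ({p i, p j, p k} : Set E)

def IsPlaneDrawing {ι E : Type*} [AddCommGroup E] [Module ℝ E] (p : ι → E)
    (G : SimpleGraph ι) : Prop :=
  ∀ i j k l, G.Adj i j → G.Adj k l → ({i, j} : Set ι) ≠ {k, l} →
    segment ℝ (p i) (p j) ∩ segment ℝ (p k) (p l) ⊆ p '' (({i, j} : Set ι) ∩ {k, l})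

namespace GeneralPosition

variable {ι E : Type*} [AddCommGroup E] [Module ℝ E] {p : ι → E}

theorem notMem_affineSpan_pair (hp : GeneralPosition p) {i j k : ι} (hij : i ≠ j) (hjk : j ≠ k)
    (hik : i ≠ k) : p i ∉ line[ℝ, p j, p k] :=
  fun h => hp i j k hij hjk hik (collinear_insert_of_mem_affineSpan_pair h)

theorem eq_or_eq_of_mem_segment (hp : GeneralPosition p) {i j k : ι} (hij : i ≠ j)
    (hk : p k ∈ segment ℝ (p i) (p j)) : k = i ∨ k = j := by
  by_contra! h
  exact hp.notMem_affineSpan_pair h.1 hij h.2 (mem_segment_iff_wbtw.1 hk).mem_affineSpan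

theorem segment_inter_segment_subset (hp : GeneralPosition p) {i j k : ι} (hij : i ≠ j)
    (hjk : j ≠ k) (hik : i ≠ k) :
    segment ℝ (p i) (p j) ∩ segment ℝ (p i) (p k) ⊆ {p i} := by
  rintro x ⟨hxj, hxk⟩
  rw [segment_eq_image'] at hxj hxk
  obtain ⟨s, -, rfl⟩ := hxj
  obtain ⟨t, -, hst⟩ := hxk
  rcases eq_or_ne s 0 with rfl | hs
  · simp
  refine absurd ?_ (hp.notMem_affineSpan_pair hij.symm hik hjk)
  have hj : p j = AffineMap.lineMap (p i) (p k) (t / s) := by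
    rw [AffineMap.lineMap_apply_module', div_eq_inv_mul, mul_smul, add_left_cancel hst,
      smul_smul, inv_mul_cancel₀ hs, one_smul, sub_add_cancel]
  exact hj ▸ AffineMap.lineMap_mem_affineSpan_pair _ _ _

theorem injOn_rayCoord_sub {f g : E →ₗ[ℝ] ℝ} {r : ι} (hp : GeneralPosition p)
    (hfg : ∀ v, f v = 0 → g v = 0 → v = 0)
    (hpos : ∀ i, i ≠ r → 0 < f (p i - p r)) :
    Set.InjOn (fun i => rayCoord f g (p i - p r)) {i | i ≠ r} := by
  intro i hi j hj h
  by_contra hij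
  have hline := eq_smul_of_rayCoord_eq hfg (hpos i hi).ne' (hpos j hj).ne' h
  refine hp.notMem_affineSpan_pair hi (Ne.symm hj) hij ?_
  rw [sub_eq_iff_eq_add.1 hline, ← AffineMap.lineMap_apply_module']
  exact AffineMap.lineMap_mem_affineSpan_pair _ _ _

variable {G : SimpleGraph ι}

theorem isPlaneDrawing_of_disjoint (hp : GeneralPosition p)
    (h : ∀ i j k l, G.Adj i j → G.Adj k l → i ≠ k → i ≠ l → j ≠ k → j ≠ l →
      Disjoint (segment ℝ (p i) (p j)) (segment ℝ (p k) (p l))) :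
    IsPlaneDrawing p G := by
  intro i j k l hij hkl hne x hx
  have shared : ∀ {a b c}, G.Adj a b → G.Adj a c → b ≠ c →
      x ∈ segment ℝ (p a) (p b) ∩ segment ℝ (p a) (p c) → a ∈ ({i, j} : Set ι) ∩ {k, l} →
      x ∈ p '' (({i, j} : Set ι) ∩ {k, l}) := fun hab hac hbc hx ha =>
    ⟨_, ha, (hp.segment_inter_segment_subset hab.ne hbc hac.ne hx).symm⟩
  by_cases hik : i = k
  · subst hik
    exact shared hij hkl (fun h => hne (h ▸ rfl)) hx (by simp)
  by_cases hil : i = l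
  · subst hil
    rw [segment_symm ℝ (p k)] at hx
    exact shared hij hkl.symm (fun h => hne (h ▸ Set.pair_comm _ _)) hx (by simp)
  by_cases hjk : j = k
  · subst hjk
    rw [segment_symm ℝ (p i)] at hx
    exact shared hij.symm hkl (fun h => hne (h ▸ Set.pair_comm _ _)) hx (by simp)
  by_cases hjl : j = l
  · subst hjl
    rw [segment_symm ℝ (p i), segment_symm ℝ (p k)] at hx
    exact shared hij.symm hkl.symm (fun h => hne (h ▸ rfl)) hx (by simp)
  exact (Set.disjoint_left.1 (h i j k l hij hkl hik hil hjk hjl) hx.1 hx.2).elim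

theorem isPlaneDrawing_of_label (hp : GeneralPosition p) (r : ι) (A : Set ι)
    (hA : ∀ i j, G.Adj i j → i ∈ A ∨ j ∈ A) (L : E → ι)
    (hL : ∀ i j x, G.Adj i j → i ∈ A → x ∈ segment ℝ (p i) (p j) → x ≠ p r → L x = i) :
    IsPlaneDrawing p G := by
  refine hp.isPlaneDrawing_of_disjoint fun i j k l hij hkl hik hil hjk hjl =>
    Set.disjoint_left.2 fun x hx₁ hx₂ => ?_
  have hxr : x ≠ p r := by
    rintro rfl
    rcases hp.eq_or_eq_of_mem_segment hij.ne hx₁ with rfl | rfl <;>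
      rcases hp.eq_or_eq_of_mem_segment hkl.ne hx₂ with h | h <;> simp_all
  have label : ∀ {a b}, G.Adj a b → x ∈ segment ℝ (p a) (p b) → L x = a ∨ L x = b := by
    intro a b hab hx
    rcases hA a b hab with ha | hb
    · exact Or.inl (hL a b x hab ha hx hxr)
    · exact Or.inr (hL b a x hab.symm hb (segment_symm ℝ (p a) (p b) ▸ hx) hxr)
  rcases label hij hx₁ with h₁ | h₁ <;> rcases label hkl hx₂ with h₂ | h₂ <;> simp_all

end GeneralPosition

section SweepTree

variable {ι E : Type*} [Fintype ι] [AddCommGroup E] [Module ℝ E]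
  (p : ι → E) (color : ι → Bool) (f g : E →ₗ[ℝ] ℝ) (r : ι)

noncomputable def oppositeCoords : Finset ℝ :=
  (univ.filter (color · ≠ color r)).image fun i => rayCoord f g (p i - p r)

/-- Seen from `p r`, `x` is attached to the opposite-coloured point on the nearest ray not above
the ray of `x`, or on the lowest ray if there is none below. -/
noncomputable def sweepAttach (x : E) : ι :=
  haveI : Nonempty ι := ⟨r⟩
  invFunOn (fun i => rayCoord f g (p i - p r)) {i | color i ≠ color r}
    ((oppositeCoords p color f g r).floorOrMin (rayCoord f g (x - p r)))

open Classical in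
noncomputable def sweepParent (i : ι) : ι :=
  if color i = color r ∧ i ≠ r then sweepAttach p color f g r (p i) else r

noncomputable def sweepTree : SimpleGraph ι :=
  fromRel fun i j => sweepParent p color f g r i = j

variable {p color f g r}

theorem mem_oppositeCoords {i : ι} (hi : color i ≠ color r) :
    rayCoord f g (p i - p r) ∈ oppositeCoords p color f g r :=
  mem_image_of_mem _ (mem_filter.2 ⟨mem_univ i, hi⟩)

theorem sweepAttach_congr {x y : E} (h : rayCoord f g (x - p r) = rayCoord f g (y - p r)) :
    sweepAttach p color f g r x = sweepAttach p color f g r y := by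
  rw [sweepAttach, h, sweepAttach]

theorem sweepAttach_spec (hopp : ∃ i, color i ≠ color r) (x : E) :
    color (sweepAttach p color f g r x) ≠ color r ∧
      rayCoord f g (p (sweepAttach p color f g r x) - p r) =
        (oppositeCoords p color f g r).floorOrMin (rayCoord f g (x - p r)) := by
  obtain ⟨i, hi⟩ := hopp
  obtain ⟨j, hj, hjeq⟩ :=
    mem_image.1 (floorOrMin_mem ⟨_, mem_oppositeCoords (p := p) (f := f) (g := g) hi⟩
      (rayCoord f g (x - p r)))
  have hex : ∃ j ∈ {i | color i ≠ color r}, rayCoord f g (p j - p r) = _ :=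
    ⟨j, (mem_filter.1 hj).2, hjeq⟩
  have : Nonempty ι := ⟨r⟩
  exact ⟨invFunOn_mem hex, invFunOn_eq hex⟩

theorem sweepAttach_self (hp : GeneralPosition p) (hfg : ∀ v, f v = 0 → g v = 0 → v = 0)
    (hpos : ∀ i, i ≠ r → 0 < f (p i - p r)) {i : ι} (hi : color i ≠ color r) :
    sweepAttach p color f g r (p i) = i := by
  have hinj : Set.InjOn (fun i => rayCoord f g (p i - p r)) {i | color i ≠ color r} :=
    (hp.injOn_rayCoord_sub hfg hpos).mono fun j hj => by rintro rfl; exact hj rfl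
  have : Nonempty ι := ⟨r⟩
  rw [sweepAttach, floorOrMin_of_mem (mem_oppositeCoords hi)]
  exact hinj.leftInvOn_invFunOn hi

theorem sweepAttach_eq_of_mem_segment_root (hp : GeneralPosition p)
    (hfg : ∀ v, f v = 0 → g v = 0 → v = 0) (hpos : ∀ i, i ≠ r → 0 < f (p i - p r)) {i : ι}
    (hi : color i ≠ color r) {x : E} (hx : x ∈ segment ℝ (p i) (p r)) (hxr : x ≠ p r) :
    sweepAttach p color f g r x = i := by
  rw [segment_symm, segment_eq_image'] at hx
  obtain ⟨c, -, rfl⟩ := hx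
  have hc : c ≠ 0 := by
    rintro rfl
    simp at hxr
  refine (sweepAttach_congr ?_).trans (sweepAttach_self hp hfg hpos hi)
  rw [add_sub_cancel_left, rayCoord_smul hc]

theorem sweepAttach_eq_of_mem_segment (hopp : ∃ i, color i ≠ color r)
    (hpos : ∀ i, i ≠ r → 0 < f (p i - p r)) {j : ι} (hj : j ≠ r) {x : E}
    (hx : x ∈ segment ℝ (p j) (p (sweepAttach p color f g r (p j)))) :
    sweepAttach p color f g r x = sweepAttach p color f g r (p j) := by
  obtain ⟨hb, hbcoord⟩ := sweepAttach_spec hopp (p j)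
  have hbr : sweepAttach p color f g r (p j) ≠ r := fun h => hb (by rw [h])
  have hcoord := rayCoord_mem_segment (g := g) (hpos j hj) (hpos _ hbr)
    (mem_segment_iff_wbtw.2 ((wbtw_vsub_const_iff (p r)).2 (mem_segment_iff_wbtw.1 hx)))
  rw [vsub_eq_sub, segment_eq_uIcc, hbcoord] at hcoord
  rw [sweepAttach, floorOrMin_eq_of_mem_uIcc hcoord, sweepAttach]

theorem sweepParent_root : sweepParent p color f g r r = r := by
  simp [sweepParent]

theorem sweepParent_of_color_ne {i : ι} (hi : color i ≠ color r) :
    sweepParent p color f g r i = r := by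
  simp [sweepParent, hi]

theorem sweepParent_of_color_eq {i : ι} (hi : color i = color r) (hir : i ≠ r) :
    sweepParent p color f g r i = sweepAttach p color f g r (p i) := by
  simp [sweepParent, hi, hir]

theorem color_sweepParent_ne (hopp : ∃ i, color i ≠ color r) {i : ι}
    (hi : sweepParent p color f g r i ≠ i) : color (sweepParent p color f g r i) ≠ color i := by
  by_cases hc : color i = color r
  · have hir : i ≠ r := by
      rintro rfl
      exact hi sweepParent_root
    rw [sweepParent_of_color_eq hc hir, hc]
    exact (sweepAttach_spec hopp _).1
  · rw [sweepParent_of_color_ne hc]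
    exact Ne.symm hc

theorem sweepTree_adj_color_ne (hopp : ∃ i, color i ≠ color r) {i j : ι}
    (h : (sweepTree p color f g r).Adj i j) : color i ≠ color j := by
  obtain ⟨hij, rfl | rfl⟩ := (fromRel_adj _ _ _).1 h
  · exact (color_sweepParent_ne hopp (Ne.symm hij)).symm
  · exact color_sweepParent_ne hopp hij

theorem isTree_sweepTree (hopp : ∃ i, color i ≠ color r) :
    (sweepTree p color f g r).IsTree := by
  classical
  refine isTree_fromRel_of_rank_lt _
    (fun i => if i = r then 0 else if color i = color r then 2 else 1) r sweepParent_root ?_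
  intro i hir
  by_cases hc : color i = color r
  · obtain ⟨hb, -⟩ := sweepAttach_spec (f := f) (g := g) hopp (p i)
    have hbr : sweepAttach p color f g r (p i) ≠ r := fun h => hb (by rw [h])
    simp [sweepParent_of_color_eq hc hir, hir, hc, hb, hbr]
  · simp [sweepParent_of_color_ne hc, hir, hc]

theorem sweepAttach_eq_of_sweepTree_adj (hp : GeneralPosition p)
    (hfg : ∀ v, f v = 0 → g v = 0 → v = 0) (hpos : ∀ i, i ≠ r → 0 < f (p i - p r))
    (hopp : ∃ i, color i ≠ color r) {i j : ι} (h : (sweepTree p color f g r).Adj i j)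
    (hi : color i ≠ color r) {x : E} (hx : x ∈ segment ℝ (p i) (p j)) (hxr : x ≠ p r) :
    sweepAttach p color f g r x = i := by
  obtain ⟨-, hpar | hpar⟩ := (fromRel_adj _ _ _).1 h
  · rw [← hpar, sweepParent_of_color_ne hi] at hx
    exact sweepAttach_eq_of_mem_segment_root hp hfg hpos hi hx hxr
  · have hj : color j = color r ∧ j ≠ r := by
      by_contra hj
      simp only [sweepParent, if_neg hj] at hpar
      exact hi (by rw [← hpar])
    rw [sweepParent_of_color_eq hj.1 hj.2] at hpar
    subst hpar
    rw [segment_symm] at hx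
    exact sweepAttach_eq_of_mem_segment hopp hpos hj.2 hx

theorem isPlaneDrawing_sweepTree (hp : GeneralPosition p)
    (hfg : ∀ v, f v = 0 → g v = 0 → v = 0) (hpos : ∀ i, i ≠ r → 0 < f (p i - p r))
    (hopp : ∃ i, color i ≠ color r) : IsPlaneDrawing p (sweepTree p color f g r) := by
  refine hp.isPlaneDrawing_of_label r {i | color i ≠ color r} (fun i j h => ?_)
    (sweepAttach p color f g r) fun _ _ _ h hi =>
      sweepAttach_eq_of_sweepTree_adj hp hfg hpos hopp h hi
  by_cases hi : color i = color r
  · exact Or.inr fun hj => sweepTree_adj_color_ne hopp h (hi.trans hj.symm)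
  · exact Or.inl hi

end SweepTree

theorem exists_linearMap_injective_comp {ι : Type*} [Finite ι] {p : ι → ℝ × ℝ}
    (hp : Injective p) :
    ∃ f : ℝ × ℝ →ₗ[ℝ] ℝ, Injective (f ∘ p) ∧
      ∀ v, f v = 0 → LinearMap.snd ℝ ℝ ℝ v = 0 → v = 0 := by
  -- `fst + a • snd` identifies `p i` and `p j` only for `a` the value indexed by `(i, j)`.
  obtain ⟨a, ha⟩ := (Set.finite_range
    fun ij : ι × ι => -((p ij.1).1 - (p ij.2).1) / ((p ij.1).2 - (p ij.2).2)).exists_notMem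
  refine ⟨LinearMap.fst ℝ ℝ ℝ + a • LinearMap.snd ℝ ℝ ℝ, fun i j hij => hp ?_,
    fun v h1 h2 => ?_⟩
  · simp only [comp_apply, LinearMap.add_apply, LinearMap.fst_apply, LinearMap.smul_apply,
      LinearMap.snd_apply, smul_eq_mul] at hij
    by_cases h2 : (p i).2 = (p j).2
    · exact Prod.ext (by rw [h2] at hij; linarith) h2
    · refine (ha ⟨(i, j), ?_⟩).elim
      rw [div_eq_iff (sub_ne_zero.2 h2)]
      linarith
  · simp_all [Prod.ext_iff]

/-- For any finite set of points in the plane in general position, partitioned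
into nonempty red and blue classes, the straight-line drawing of the complete
bipartite graph between the classes contains a crossing-free spanning tree.
(`color i = true` means red.) -/
theorem bipartite_straightline_plane_spanning_tree (N : ℕ)
    (p : Fin N → ℝ × ℝ) (hinj : Function.Injective p)
    (color : Fin N → Bool)
    (hred : ∃ i, color i = true) (hblue : ∃ i, color i = false)
    (hgp : ∀ i j k : Fin N, i ≠ j → j ≠ k → i ≠ k →
      ¬ Collinear ℝ ({p i, p j, p k} : Set (ℝ × ℝ))) :
    ∃ T : SimpleGraph (Fin N), T.IsTree ∧
      (∀ i j, T.Adj i j → color i ≠ color j) ∧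
      (∀ i j k l, T.Adj i j → T.Adj k l → ({i, j} : Set (Fin N)) ≠ {k, l} →
        segment ℝ (p i) (p j) ∩ segment ℝ (p k) (p l) ⊆
          p '' (({i, j} : Set (Fin N)) ∩ ({k, l} : Set (Fin N)))) := by
  obtain ⟨f, hf, hfg⟩ := exists_linearMap_injective_comp hinj
  have : Nonempty (Fin N) := hred.nonempty
  obtain ⟨r, hr⟩ := Finite.exists_min (f ∘ p)
  have hpos : ∀ i, i ≠ r → 0 < f (p i - p r) := fun i hi => by
    rw [map_sub, sub_pos]
    exact (hr i).lt_of_ne (hf.ne (Ne.symm hi))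
  have hopp : ∃ i, color i ≠ color r := by
    cases color r
    · exact hred.imp fun i hi => by simp [hi]
    · exact hblue.imp fun i hi => by simp [hi]
  exact ⟨sweepTree p color f (LinearMap.snd ℝ ℝ ℝ) r, isTree_sweepTree hopp,
    fun i j => sweepTree_adj_color_ne hopp, isPlaneDrawing_sweepTree hgp hfg hpos hopp⟩
end

section
/- For points in the plane in general position partitioned into red and blue classes, if v is a red point and the rays from v through each blue point partition the plane into wedges, then assigning each remaining red point to the blue point defining the boundary ray of its half-wedge (split by angle bisectors) yields segments that do not cross any segment from v to a blue point. -/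
/-!
A point `x` on the open segment from `v` to a blue point `b` sees `w` from `v` under the angle
`∠ w v b`. A point `x` on the open segment from `w` to `bw w` lies strictly inside the angle
`∠ w v (bw w)`, because `v`, `w`, `bw w` are not collinear; so it sees `w` under a strictly
smaller angle. A common point would therefore satisfy `∠ w v b < ∠ w v (bw w)`, against the
minimality of `bw w`.
-/

open EuclideanGeometry

open scoped Classical

variable {V : Type*} [NormedAddCommGroup V] [InnerProductSpace ℝ V]

namespace InnerProductGeometry

/-- The angle between `a` and `c` is additive at any vector of the cone they span, and the part
between `l • a + m • c` and `c` is positive by linear independence. -/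
theorem angle_smul_add_smul_lt_angle {a c : V} (hac : LinearIndependent ℝ ![a, c])
    {l m : ℝ} (hl : 0 < l) (hm : 0 < m) :
    angle a (l • a + m • c) < angle a c := by
  rw [LinearIndependent.pair_iff] at hac
  have hne : l • a + m • c ≠ 0 := fun h => hl.ne' (hac l m h).1
  have hspan : l • a + m • c ∈ Submodule.span NNReal {a, c} :=
    Submodule.mem_span_pair.2 ⟨⟨l, hl.le⟩, ⟨m, hm.le⟩, rfl⟩
  have hsplit := angle_eq_angle_add_add_angle_add_of_mem_span hne hspan
  have hpos : 0 < angle (l • a + m • c) c := by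
    refine (angle_nonneg _ _).lt_of_ne fun h => ?_
    obtain ⟨-, r, hr, hc⟩ := angle_eq_zero_iff.1 h.symm
    have hzero : (r * l) • a + (r * m - 1) • c = 0 := by
      rw [sub_smul, one_smul, mul_smul, mul_smul, add_sub_assoc', ← smul_add, ← hc, sub_self]
    exact (mul_pos hr hl).ne' (hac _ _ hzero).1
  linarith

end InnerProductGeometry

theorem linearIndependent_sub_of_not_collinear {v w c : V}
    (h : ¬ Collinear ℝ ({v, w, c} : Set V)) : LinearIndependent ℝ ![w - v, c - v] := by
  have hcv : c - v ≠ 0 := by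
    rintro hcv
    rw [sub_eq_zero.1 hcv] at h
    simp [collinear_pair] at h
  rw [LinearIndependent.pair_symm_iff, LinearIndependent.pair_iff' hcv]
  rintro k hk
  have hw : w ∈ line[ℝ, v, c] := by
    rw [← sub_add_cancel w v, ← hk, ← AffineMap.lineMap_apply_module']
    exact AffineMap.lineMap_mem_affineSpan_pair _ _ _
  exact h (Set.insert_comm w v {c} ▸ collinear_insert_of_mem_affineSpan_pair hw)

theorem angle_eq_angle_of_mem_openSegment (w : V) {v b x : V} (hx : x ∈ openSegment ℝ v b) :
    ∠ w v x = ∠ w v b := by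
  obtain ⟨s, t, -, ht, hst, rfl⟩ := hx
  obtain rfl : s = 1 - t := by linarith
  have hray : (1 - t) • v + t • b - v = t • (b - v) := by module
  simp only [EuclideanGeometry.angle, vsub_eq_sub, hray,
    InnerProductGeometry.angle_smul_right_of_pos _ _ ht]

theorem angle_lt_angle_of_mem_openSegment {v w c x : V}
    (h : ¬ Collinear ℝ ({v, w, c} : Set V)) (hx : x ∈ openSegment ℝ w c) :
    ∠ w v x < ∠ w v c := by
  obtain ⟨l, m, hl, hm, hlm, rfl⟩ := hx
  obtain rfl : l = 1 - m := by linarith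
  have hcone : (1 - m) • w + m • c - v = (1 - m) • (w - v) + m • (c - v) := by module
  simp only [EuclideanGeometry.angle, vsub_eq_sub, hcone]
  exact InnerProductGeometry.angle_smul_add_smul_lt_angle
    (linearIndependent_sub_of_not_collinear h) hl hm

theorem half_wedge_assignment_no_crossing_general
    (R B : Finset (EuclideanSpace ℝ (Fin 2)))
    (hdisj : Disjoint R B)
    (hgp : ∀ p ∈ R ∪ B, ∀ q ∈ R ∪ B, ∀ s ∈ R ∪ B, p ≠ q → q ≠ s → p ≠ s →
      ¬ Collinear ℝ ({p, q, s} : Set (EuclideanSpace ℝ (Fin 2))))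
    (v : EuclideanSpace ℝ (Fin 2)) (hv : v ∈ R)
    (bw : EuclideanSpace ℝ (Fin 2) → EuclideanSpace ℝ (Fin 2))
    (hbw : ∀ w ∈ R, w ≠ v → bw w ∈ B ∧
      ∀ b ∈ B, ∠ w v (bw w) ≤ ∠ w v b) :
    ∀ w ∈ R, w ≠ v → ∀ b ∈ B,
      openSegment ℝ w (bw w) ∩ openSegment ℝ v b = ∅ := by
  intro w hw hwv b hb
  obtain ⟨hbwB, hmin⟩ := hbw w hw hwv
  have hne_bw : ∀ p ∈ R, p ≠ bw w := fun p hp h => Finset.disjoint_left.1 hdisj hp (h ▸ hbwB)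
  have hncol : ¬ Collinear ℝ ({v, w, bw w} : Set (EuclideanSpace ℝ (Fin 2))) :=
    hgp v (Finset.mem_union_left _ hv) w (Finset.mem_union_left _ hw) (bw w)
      (Finset.mem_union_right _ hbwB) hwv.symm (hne_bw w hw) (hne_bw v hv)
  refine Set.eq_empty_of_forall_notMem fun x ⟨hx_bw, hx_b⟩ => ?_
  have hlt := angle_lt_angle_of_mem_openSegment hncol hx_bw
  rw [angle_eq_angle_of_mem_openSegment w hx_b] at hlt
  exact (hmin b hb).not_gt hlt

/-- For points in general position partitioned into red and blue classes with
`v` red, assigning each remaining red point `w` to the blue point `bw w` on the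
ray bounding its half-wedge (i.e. the blue point minimizing the angle at `v`
between the ray through `w` and the ray through a blue point, as produced by
splitting the wedges with angle bisectors) yields segments that do not cross
any segment from `v` to a blue point. -/
theorem half_wedge_assignment_no_crossing
    (R B : Finset (EuclideanSpace ℝ (Fin 2)))
    (hR : R.Nonempty) (hB : B.Nonempty) (hdisj : Disjoint R B)
    (hgp : ∀ p ∈ R ∪ B, ∀ q ∈ R ∪ B, ∀ s ∈ R ∪ B, p ≠ q → q ≠ s → p ≠ s →
      ¬ Collinear ℝ ({p, q, s} : Set (EuclideanSpace ℝ (Fin 2))))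
    (v : EuclideanSpace ℝ (Fin 2)) (hv : v ∈ R)
    (bw : EuclideanSpace ℝ (Fin 2) → EuclideanSpace ℝ (Fin 2))
    (hbw : ∀ w ∈ R, w ≠ v → bw w ∈ B ∧
      ∀ b ∈ B, ∠ w v (bw w) ≤ ∠ w v b) :
    ∀ w ∈ R, w ≠ v → ∀ b ∈ B,
      openSegment ℝ w (bw w) ∩ openSegment ℝ v b = ∅ :=
  half_wedge_assignment_no_crossing_general R B hdisj hgp v hv bw hbw
end
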